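/- Let η be a nonempty partition. Then: (i) d(η^r) = d(η) iff η_{d(η)+1} = d(η), and d(η^r) = d(η) − 1 iff η_{d(η)+1} < d(η); (ii) d(η^c) = d(η) iff η_{d(η)} > d(η), and d(η^c) = d(η) − 1 iff η_{d(η)} = d(η); (iii) d(η^{rc}) = d(η) − 1. -/

import Mathlib

/-!
Encode `η` by its Maya diagram `S = {η_i - i}` (an integer `t` standing for `t + 1/2`). The
beads at nonnegative positions are exactly `η_i - i` for `1 ≤ i ≤ d(η)`, so `d(η)` counts them.
For `η^r` we remove the bead `min S⁺` and shift up by one, so `d(η^r) + 1` counts the beads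
`≥ -1`; `-1` is a bead iff `η_{d+1} = d`. For `η^c` we add a negative bead and shift down, so
`d(η^c)` counts the beads `≥ 1`, which misses a bead at `0` iff `η_d = d`. For `η^{rc}` one
nonnegative bead is traded for a negative one.
-/

/-- A partition `η`, given by its parts `η.part i` for `i ≥ 1` (indexed from 1;
by convention `part 0 = part 1`), weakly decreasing and eventually zero. -/
structure PartitionSeq where
  part : ℕ → ℕ
  antitone : ∀ ⦃i j : ℕ⦄, i ≤ j → part j ≤ part i
  exists_zero : ∃ N, part N = 0
  head : part 0 = part 1

namespace PartitionSeq

/-- The Maya diagram of `η` in the ℤ-model: an integer `t` represents the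
half-integer `t + 1/2`, so `mayaZ η` encodes `S(η) = {η_i − i + 1/2 | i ≥ 1}`. -/
def mayaZ (η : PartitionSeq) : Set ℤ := {t | ∃ i : ℕ, 1 ≤ i ∧ t = (η.part i : ℤ) - (i : ℤ)}

/-- `ℓ(η)`: the number of nonzero parts. -/
noncomputable def len (η : PartitionSeq) : ℕ := sSup {i | η.part i ≠ 0}

/-- `d(η) = max {i : η_i ≥ i}` (Durfee square size), `0` for the empty partition. -/
noncomputable def durfee (η : PartitionSeq) : ℕ := sSup {i | i ≤ η.part i}

/-- `d̃(η) = max {i : η_i ≥ d(η)}`. -/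
noncomputable def dtil (η : PartitionSeq) : ℕ := sSup {i | η.durfee ≤ η.part i}

/-- `min S⁺`: the least element of `S` representing a positive half-integer. -/
noncomputable def minPos (S : Set ℤ) : ℤ := sInf {t | t ∈ S ∧ 0 ≤ t}

/-- `max S⁻`: the greatest element not in `S` representing a negative half-integer. -/
noncomputable def maxNeg (S : Set ℤ) : ℤ := sSup {t | t ∉ S ∧ t < 0}

/-- `ηr = η^r`: defined by `S(η^r) = {t+1 | t ∈ S(η) \ {min S(η)⁺}}`. -/
def IsR (η ηr : PartitionSeq) : Prop :=
  mayaZ ηr = (fun t => t + 1) '' (mayaZ η \ {minPos (mayaZ η)})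

/-- `ηc = η^c`: defined by `S(η^c) = {t−1 | t ∈ S(η) ∪ {max S(η)⁻}}`. -/
def IsC (η ηc : PartitionSeq) : Prop :=
  mayaZ ηc = (fun t => t - 1) '' (mayaZ η ∪ {maxNeg (mayaZ η)})

/-- `ηrc = η^{rc}`: defined by `S(η^{rc}) = (S(η) \ {min S(η)⁺}) ∪ {max S(η)⁻}`. -/
def IsRC (η ηrc : PartitionSeq) : Prop :=
  mayaZ ηrc = (mayaZ η \ {minPos (mayaZ η)}) ∪ {maxNeg (mayaZ η)}

/-- `ηc = η′` is the conjugate partition: `η′_j = |{i ≥ 1 : η_i ≥ j}|`. -/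
def IsConj (η ηc : PartitionSeq) : Prop :=
  ∀ j : ℕ, 1 ≤ j → ηc.part j = Set.ncard {i : ℕ | 1 ≤ i ∧ j ≤ η.part i}

/-- `|η|`: the sum of the parts. -/
noncomputable def size (η : PartitionSeq) : ℕ := ∑ i ∈ Finset.Icc 1 η.len, η.part i

end PartitionSeq

namespace PartitionSeq

open Set

section IntSets

open Classical in
lemma ncard_inter_Ici_eq_add_ite {S : Set ℤ} {k : ℤ} (hS : (S ∩ Ici (k + 1)).Finite) :
    (S ∩ Ici k).ncard = (S ∩ Ici (k + 1)).ncard + if k ∈ S then 1 else 0 := by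
  split_ifs with hk
  · have hsplit : S ∩ Ici k = insert k (S ∩ Ici (k + 1)) := by
      ext t
      simp only [mem_inter_iff, mem_Ici, mem_insert_iff]
      constructor
      · rintro ⟨ht, hkt⟩
        rcases hkt.eq_or_lt with rfl | hlt
        exacts [Or.inl rfl, Or.inr ⟨ht, hlt⟩]
      · rintro (rfl | ⟨ht, hkt⟩)
        exacts [⟨hk, le_rfl⟩, ⟨ht, by omega⟩]
    rw [hsplit, ncard_insert_of_notMem (by simp) hS]
  · congr 1
    ext t
    simp only [mem_inter_iff, mem_Ici]
    constructor
    · rintro ⟨ht, hkt⟩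
      exact ⟨ht, lt_of_le_of_ne hkt (by rintro rfl; exact hk ht)⟩
    · rintro ⟨ht, hkt⟩
      exact ⟨ht, by omega⟩

lemma ncard_image_add_const_inter_Ici (X : Set ℤ) (a k : ℤ) :
    ((· + a) '' X ∩ Ici k).ncard = (X ∩ Ici (k - a)).ncard := by
  rw [← sub_add_cancel k a, ← image_add_const_Ici, ← image_inter (add_left_injective a),
    ncard_image_of_injective _ (add_left_injective a), add_sub_cancel_right]

lemma union_singleton_inter_Ici_of_lt (X : Set ℤ) {g k : ℤ} (hg : g < k) :
    (X ∪ {g}) ∩ Ici k = X ∩ Ici k := by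
  rw [union_inter_distrib_right, singleton_inter_eq_empty.mpr (by simpa using hg), union_empty]

lemma minPos_mem {S : Set ℤ} (h : (S ∩ Ici 0).Nonempty) : minPos S ∈ S ∩ Ici 0 :=
  Int.csInf_mem h ⟨0, fun _ ht => ht.2⟩

lemma maxNeg_lt_zero {S : Set ℤ} {g : ℤ} (hg : g < 0) (hgS : g ∉ S) : maxNeg S < 0 :=
  (Int.csSup_mem (s := {t | t ∉ S ∧ t < 0}) ⟨g, hgS, hg⟩ ⟨0, fun _ ht => ht.2.le⟩).2

end IntSets

variable (η : PartitionSeq)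

def mayaPt (i : ℕ) : ℤ := η.part i - i

lemma mayaPt_strictAnti : StrictAnti η.mayaPt :=
  strictAnti_nat_of_succ_lt fun i => by
    have := η.antitone (Nat.le_add_right i 1)
    simp only [mayaPt]
    push_cast
    omega

lemma mayaPt_mem_mayaZ {i : ℕ} (hi : 1 ≤ i) : η.mayaPt i ∈ η.mayaZ := ⟨i, hi, rfl⟩

variable {η}

lemma notMem_mayaZ_of_lt_of_lt {n : ℕ} {t : ℤ} (h₁ : η.mayaPt (n + 1) < t)
    (h₂ : t < η.mayaPt n) : t ∉ η.mayaZ := by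
  rintro ⟨i, -, rfl⟩
  rcases le_or_gt i n with hi | hi
  · exact (η.mayaPt_strictAnti.antitone hi).not_gt h₂
  · exact (η.mayaPt_strictAnti.antitone (Nat.succ_le_of_lt hi)).not_gt h₁

variable (η)

lemma finite_mayaZ_inter_Ici (k : ℤ) : (η.mayaZ ∩ Ici k).Finite := by
  refine (finite_Icc k (η.mayaPt 1)).subset ?_
  rintro _ ⟨⟨i, hi, rfl⟩, hk⟩
  exact ⟨hk, η.mayaPt_strictAnti.antitone hi⟩

lemma bddAbove_le_part : BddAbove {i | i ≤ η.part i} := by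
  obtain ⟨N, hN⟩ := η.exists_zero
  refine ⟨N, fun i (hi : i ≤ η.part i) => ?_⟩
  by_contra! h
  have := η.antitone h.le
  omega

lemma durfee_le_part_durfee : η.durfee ≤ η.part η.durfee :=
  Nat.sSup_mem (s := {i | i ≤ η.part i}) ⟨0, Nat.zero_le _⟩ η.bddAbove_le_part

variable {η}

lemma le_durfee_iff {i : ℕ} : i ≤ η.durfee ↔ i ≤ η.part i :=
  ⟨fun h => h.trans (η.durfee_le_part_durfee.trans (η.antitone h)),
    fun h => le_csSup η.bddAbove_le_part h⟩

lemma mayaPt_nonneg_iff {i : ℕ} : 0 ≤ η.mayaPt i ↔ i ≤ η.durfee := by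
  rw [le_durfee_iff, mayaPt]
  omega

lemma one_le_durfee (hne : η.part 1 ≠ 0) : 1 ≤ η.durfee :=
  le_durfee_iff.mpr (Nat.one_le_iff_ne_zero.mpr hne)

lemma part_durfee_add_one_le : η.part (η.durfee + 1) ≤ η.durfee :=
  Nat.le_of_lt_succ (not_le.mp (mt le_durfee_iff.mpr (by omega)))

variable (η)

lemma mayaZ_inter_Ici_zero : η.mayaZ ∩ Ici 0 = η.mayaPt '' Icc 1 η.durfee := by
  ext t
  constructor
  · rintro ⟨⟨i, hi, rfl⟩, ht⟩
    exact ⟨i, ⟨hi, mayaPt_nonneg_iff.mp ht⟩, rfl⟩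
  · rintro ⟨i, ⟨hi, hid⟩, rfl⟩
    exact ⟨η.mayaPt_mem_mayaZ hi, mayaPt_nonneg_iff.mpr hid⟩

lemma durfee_eq_ncard : η.durfee = (η.mayaZ ∩ Ici 0).ncard := by
  rw [mayaZ_inter_Ici_zero, ncard_image_of_injective _ η.mayaPt_strictAnti.injective,
    ← Finset.coe_Icc, ncard_coe_finset, Nat.card_Icc, Nat.add_sub_cancel]

variable {η}

lemma neg_one_mem_mayaZ_iff : -1 ∈ η.mayaZ ↔ η.part (η.durfee + 1) = η.durfee := by
  have hd := (mayaPt_nonneg_iff (η := η)).mpr le_rfl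
  have hd1 := part_durfee_add_one_le (η := η)
  constructor
  · intro hmem
    by_contra hne
    refine notMem_mayaZ_of_lt_of_lt (n := η.durfee) ?_ (by omega) hmem
    simp only [mayaPt]
    omega
  · intro h
    convert η.mayaPt_mem_mayaZ (Nat.le_add_left 1 η.durfee)
    simp only [mayaPt, h]
    omega

lemma zero_mem_mayaZ_iff (hne : η.part 1 ≠ 0) : 0 ∈ η.mayaZ ↔ η.part η.durfee = η.durfee := by
  have hd := η.durfee_le_part_durfee
  have hd1 := part_durfee_add_one_le (η := η)
  constructor
  · intro hmem
    by_contra hne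
    refine notMem_mayaZ_of_lt_of_lt (n := η.durfee) ?_ ?_ hmem <;>
    · simp only [mayaPt]
      omega
  · intro h
    convert η.mayaPt_mem_mayaZ (one_le_durfee hne)
    simp only [mayaPt, h]
    omega

variable (η)

lemma bddAbove_part_ne_zero : BddAbove {i | η.part i ≠ 0} := by
  obtain ⟨N, hN⟩ := η.exists_zero
  refine ⟨N, fun i hi => ?_⟩
  by_contra! h
  exact hi (Nat.eq_zero_of_le_zero (hN ▸ η.antitone h.le))

variable {η}

/-- Past the last part `η_ℓ` the beads sit at `-ℓ-1, -ℓ-2, …`, leaving a hole at `-ℓ`. -/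
lemma neg_len_notMem_mayaZ (hne : η.part 1 ≠ 0) : -(η.len : ℤ) ∉ η.mayaZ := by
  have hlen : η.part η.len ≠ 0 := Nat.sSup_mem ⟨1, hne⟩ η.bddAbove_part_ne_zero
  have hlen1 : η.part (η.len + 1) = 0 := by
    by_contra h
    have : η.len + 1 ≤ η.len := le_csSup η.bddAbove_part_ne_zero h
    omega
  refine notMem_mayaZ_of_lt_of_lt (n := η.len) ?_ ?_ <;>
  · simp only [mayaPt]
    omega

lemma one_le_len (hne : η.part 1 ≠ 0) : 1 ≤ η.len :=
  le_csSup η.bddAbove_part_ne_zero hne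

lemma maxNeg_mayaZ_lt_zero (hne : η.part 1 ≠ 0) : maxNeg η.mayaZ < 0 :=
  maxNeg_lt_zero (by have := one_le_len hne; omega) (neg_len_notMem_mayaZ hne)

lemma minPos_mayaZ_mem (hne : η.part 1 ≠ 0) : minPos η.mayaZ ∈ η.mayaZ ∩ Ici 0 :=
  minPos_mem ⟨_, η.mayaPt_mem_mayaZ le_rfl, mayaPt_nonneg_iff.mpr (one_le_durfee hne)⟩

open Classical in
lemma durfee_add_one_of_isR {ηr : PartitionSeq} (hne : η.part 1 ≠ 0) (hr : η.IsR ηr) :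
    ηr.durfee + 1 = η.durfee + if η.part (η.durfee + 1) = η.durfee then 1 else 0 := by
  have hm : minPos η.mayaZ ∈ η.mayaZ ∩ Ici (-1) :=
    inter_subset_inter_right _ (Ici_subset_Ici.mpr (by norm_num)) (minPos_mayaZ_mem hne)
  have hshift : ηr.durfee + 1 = (η.mayaZ ∩ Ici (-1)).ncard := by
    rw [ηr.durfee_eq_ncard, hr, ncard_image_add_const_inter_Ici, zero_sub,
      sdiff_inter_right_comm, ncard_sdiff_singleton_add_one hm (η.finite_mayaZ_inter_Ici _)]
  rw [hshift, ncard_inter_Ici_eq_add_ite (by simpa using η.finite_mayaZ_inter_Ici 0),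
    neg_add_cancel, ← durfee_eq_ncard, if_congr neg_one_mem_mayaZ_iff rfl rfl]

open Classical in
lemma durfee_add_ite_of_isC {ηc : PartitionSeq} (hne : η.part 1 ≠ 0) (hc : η.IsC ηc) :
    ηc.durfee + (if η.part η.durfee = η.durfee then 1 else 0) = η.durfee := by
  have hc' : ηc.mayaZ = (· + -1) '' (η.mayaZ ∪ {maxNeg η.mayaZ}) := by
    simpa only [IsC, sub_eq_add_neg] using hc
  have hshift : ηc.durfee = (η.mayaZ ∩ Ici 1).ncard := by
    rw [ηc.durfee_eq_ncard, hc', ncard_image_add_const_inter_Ici, zero_sub, neg_neg,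
      union_singleton_inter_Ici_of_lt _ ((maxNeg_mayaZ_lt_zero hne).trans one_pos)]
  rw [hshift, if_congr (zero_mem_mayaZ_iff hne).symm rfl rfl, η.durfee_eq_ncard,
    ncard_inter_Ici_eq_add_ite (k := 0) (by simpa using η.finite_mayaZ_inter_Ici 1), zero_add]

lemma durfee_add_one_of_isRC {ηrc : PartitionSeq} (hne : η.part 1 ≠ 0) (hrc : η.IsRC ηrc) :
    ηrc.durfee + 1 = η.durfee := by
  rw [durfee_eq_ncard, hrc, union_singleton_inter_Ici_of_lt _ (maxNeg_mayaZ_lt_zero hne),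
    sdiff_inter_right_comm,
    ncard_sdiff_singleton_add_one (minPos_mayaZ_mem hne) (η.finite_mayaZ_inter_Ici 0),
    durfee_eq_ncard]

end PartitionSeq

open PartitionSeq

/-- Durfee numbers of `η^r`, `η^c`, `η^{rc}`. -/
theorem durfee_of_modified (η ηr ηc ηrc : PartitionSeq) (hne : η.part 1 ≠ 0)
    (hr : η.IsR ηr) (hc : η.IsC ηc) (hrc : η.IsRC ηrc) :
    ((ηr.durfee = η.durfee ↔ η.part (η.durfee + 1) = η.durfee) ∧
     (ηr.durfee = η.durfee - 1 ↔ η.part (η.durfee + 1) < η.durfee)) ∧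
    ((ηc.durfee = η.durfee ↔ η.durfee < η.part η.durfee) ∧
     (ηc.durfee = η.durfee - 1 ↔ η.part η.durfee = η.durfee)) ∧
    ηrc.durfee = η.durfee - 1 := by
  have hd := one_le_durfee hne
  have hd₁ := part_durfee_add_one_le (η := η)
  have hd₀ := η.durfee_le_part_durfee
  have hR := durfee_add_one_of_isR hne hr
  have hC := durfee_add_ite_of_isC hne hc
  have hRC := durfee_add_one_of_isRC hne hrc
  split_ifs at hR hC <;> omega
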